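/- arXiv:2510.11582 — 2 statements merged into one kernel-verified Lean document; each statement's English description precedes it below -/
import Mathlib

section
/- Let T : ℝ₊₊^N → ℝ₊₊^N be an MSP mapping, let ‖·‖ be a monotone norm on ℝ^N, and let x* ∈ ℝ₊₊^N be the unique vector with ‖x*‖ = 1 for which T(x*) = γ x* for some γ > 0. Then for every starting point x₁ ∈ ℝ₊₊^N, the sequence (xₙ) generated by xₙ₊₁ = T(xₙ)/‖T(xₙ)‖ converges to x*. -/
open MeasureTheory Filter

/-- The open positive cone in `ℝ^N`. -/
def PosCone (N : ℕ) : Set (Fin N → ℝ) := {x | ∀ i, 0 < x i}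

/-- A monotonic, scalable, and positive (MSP) function on the positive cone `ℝ₊₊^N`:
(0) it is positive on the cone, (i) monotone on the cone, (ii) scalable, and
(iii) its infimum over the cone is positive. -/
def IsMSPFun {N : ℕ} (f : (Fin N → ℝ) → ℝ) : Prop :=
  (∀ x : Fin N → ℝ, (∀ i, 0 < x i) → 0 < f x) ∧
  (∀ x y : Fin N → ℝ, (∀ i, 0 < x i) → (∀ i, 0 < y i) → x ≤ y → f x ≤ f y) ∧
  (∀ α : ℝ, 1 < α → ∀ x : Fin N → ℝ, (∀ i, 0 < x i) → f (α • x) < α * f x) ∧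
  0 < sInf (f '' PosCone N)

/-- An MSP mapping: every coordinate function is an MSP function. -/
def IsMSPMap {N : ℕ} (T : (Fin N → ℝ) → (Fin N → ℝ)) : Prop :=
  ∀ i, IsMSPFun (fun x => T x i)

/-- A monotone norm on `ℝ^N`: a genuine norm that is order-preserving on the
nonnegative cone. -/
def IsMonoNorm {N : ℕ} (nrm : (Fin N → ℝ) → ℝ) : Prop :=
  (∀ x : Fin N → ℝ, nrm x = 0 ↔ x = 0) ∧
  (∀ (a : ℝ) (x : Fin N → ℝ), nrm (a • x) = |a| * nrm x) ∧
  (∀ x y : Fin N → ℝ, nrm (x + y) ≤ nrm x + nrm y) ∧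
  (∀ x y : Fin N → ℝ, (∀ i, 0 ≤ x i) → (∀ i, 0 ≤ y i) → x ≤ y → nrm x ≤ nrm y)

/-!
The Lyapunov function is `Φ v = maxᵢ (vᵢ / x*ᵢ) · maxᵢ (x*ᵢ / vᵢ)`, the exponential of Hilbert's
projective distance from `v` to `x*`; it is invariant under positive scaling. For `‖v‖ = 1` both
ratios are at least `1` because the norm is monotone, so monotonicity and scalability of `T`
(applied to `v ≤ λ x*` and `x* ≤ μ v`) give `Φ (T v) ≤ Φ v`, strictly unless `v = x*`. From the
second step on, the iterates lie in a compact box inside the positive cone (bounded above by the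
normalization, below by the positive infima of the `Tᵢ`), so every subsequential limit `z` has
`Φ (S z) = Φ z` for the normalized map `S`, whence `z = x*`.
-/

open Set Topology

theorem tendsto_of_isCompact_of_lyapunov {X : Type*} [TopologicalSpace X]
    [FirstCountableTopology X] [T2Space X] {K : Set X} (hK : IsCompact K) {S : X → X}
    {Φ : X → ℝ} {p : X} {x : ℕ → X} (hxK : ∀ n, x n ∈ K) (hx : ∀ n, x (n + 1) = S (x n))
    (hS : ∀ z ∈ K, ContinuousAt S z) (hΦ : ∀ z ∈ K, ContinuousAt Φ z)
    (hΦS : ∀ z ∈ K, Φ (S z) ≤ Φ z) (hΦS_eq : ∀ z ∈ K, Φ (S z) = Φ z → z = p) :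
    Tendsto x atTop (𝓝 p) := by
  have hanti : Antitone (Φ ∘ x) :=
    antitone_nat_of_succ_le fun n => by simpa only [Function.comp, hx] using hΦS _ (hxK n)
  have hbdd : BddBelow (range (Φ ∘ x)) := by
    refine (hK.bddBelow_image (continuousOn_of_forall_continuousAt hΦ)).mono ?_
    rw [range_comp]
    exact image_mono (range_subset_iff.2 hxK)
  have hΦx := tendsto_atTop_ciInf hanti hbdd
  refine tendsto_of_subseq_tendsto fun ns hns => ?_
  obtain ⟨z, hzK, ψ, hψ, hz⟩ := hK.tendsto_subseq fun n => hxK (ns n)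
  have hidx : Tendsto (ns ∘ ψ) atTop atTop := hns.comp hψ.tendsto_atTop
  have hSz : Tendsto (fun k => x (ns (ψ k) + 1)) atTop (𝓝 (S z)) := by
    simp only [hx]
    exact (hS z hzK).tendsto.comp hz
  have hSzK : S z ∈ K := hK.isClosed.mem_of_tendsto hSz (Eventually.of_forall fun _ => hxK _)
  have hΦz := tendsto_nhds_unique ((hΦ z hzK).tendsto.comp hz) (hΦx.comp hidx)
  have hΦSz := tendsto_nhds_unique ((hΦ _ hSzK).tendsto.comp hSz)
    (hΦx.comp ((tendsto_add_atTop_nat 1).comp hidx))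
  exact ⟨ψ, hΦS_eq z hzK (hΦSz.trans hΦz.symm) ▸ hz⟩

theorem smul_apply_pos {ι : Type*} {α : ℝ} {x : ι → ℝ} (hα : 0 < α) (hx : ∀ i, 0 < x i) :
    ∀ i, 0 < (α • x) i :=
  fun i => mul_pos hα (hx i)

section MaxRatio

variable {ι : Type*} [Fintype ι] [Nonempty ι] {u v : ι → ℝ} {c : ℝ}

noncomputable def maxRatio (u v : ι → ℝ) : ℝ :=
  Finset.univ.sup' Finset.univ_nonempty fun i => u i / v i

theorem maxRatio_le_iff (hv : ∀ i, 0 < v i) : maxRatio u v ≤ c ↔ ∀ i, u i ≤ c * v i := by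
  simp only [maxRatio, Finset.sup'_le_iff, Finset.mem_univ, true_implies, div_le_iff₀ (hv _)]

theorem maxRatio_lt_iff (hv : ∀ i, 0 < v i) : maxRatio u v < c ↔ ∀ i, u i < c * v i := by
  simp only [maxRatio, Finset.sup'_lt_iff, Finset.mem_univ, true_implies, div_lt_iff₀ (hv _)]

theorem le_maxRatio_mul (hv : ∀ i, 0 < v i) (i : ι) : u i ≤ maxRatio u v * v i :=
  (maxRatio_le_iff hv).1 le_rfl i

theorem maxRatio_pos (hu : ∀ i, 0 < u i) (hv : ∀ i, 0 < v i) : 0 < maxRatio u v :=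
  have i := Classical.arbitrary ι
  (div_pos (hu i) (hv i)).trans_le (Finset.le_sup' (fun i => u i / v i) (Finset.mem_univ i))

theorem maxRatio_smul_left (hc : 0 ≤ c) (u v : ι → ℝ) :
    maxRatio (c • u) v = c * maxRatio u v := by
  simp only [maxRatio, Finset.mul₀_sup' hc, Pi.smul_apply, smul_eq_mul, mul_div_assoc]

theorem maxRatio_smul_right (hc : 0 ≤ c) (u v : ι → ℝ) :
    maxRatio u (c • v) = c⁻¹ * maxRatio u v := by
  simp only [maxRatio, Finset.mul₀_sup' (inv_nonneg.2 hc), Pi.smul_apply, smul_eq_mul,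
    div_mul_eq_div_div_swap, div_eq_inv_mul _ c]

theorem eq_of_maxRatio_le_one (hu : ∀ i, 0 < u i) (hv : ∀ i, 0 < v i)
    (huv : maxRatio u v ≤ 1) (hvu : maxRatio v u ≤ 1) : u = v := by
  rw [maxRatio_le_iff hv] at huv
  rw [maxRatio_le_iff hu] at hvu
  exact funext fun i => le_antisymm (by simpa using huv i) (by simpa using hvu i)

theorem ContinuousAt.maxRatio {X : Type*} [TopologicalSpace X] {f g : X → ι → ℝ} {x : X}
    (hf : ContinuousAt f x) (hg : ContinuousAt g x) (hgx : ∀ i, 0 < g x i) :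
    ContinuousAt (fun y => maxRatio (f y) (g y)) x :=
  ContinuousAt.finset_sup'_apply _ fun i _ =>
    ((continuousAt_apply i _).comp hf).div ((continuousAt_apply i _).comp hg) (hgx i).ne'

noncomputable def expHilbertDist (u v : ι → ℝ) : ℝ := maxRatio u v * maxRatio v u

theorem expHilbertDist_smul_left (hc : 0 < c) (u v : ι → ℝ) :
    expHilbertDist (c • u) v = expHilbertDist u v := by
  rw [expHilbertDist, expHilbertDist, maxRatio_smul_left hc.le, maxRatio_smul_right hc.le,
    mul_mul_mul_comm, mul_inv_cancel₀ hc.ne', one_mul]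

theorem expHilbertDist_smul_right (hc : 0 < c) (u v : ι → ℝ) :
    expHilbertDist u (c • v) = expHilbertDist u v := by
  rw [expHilbertDist, expHilbertDist, maxRatio_smul_left hc.le, maxRatio_smul_right hc.le,
    mul_mul_mul_comm, inv_mul_cancel₀ hc.ne', one_mul]

theorem ContinuousAt.expHilbertDist {X : Type*} [TopologicalSpace X] {f g : X → ι → ℝ}
    {x : X} (hf : ContinuousAt f x) (hg : ContinuousAt g x) (hfx : ∀ i, 0 < f x i)
    (hgx : ∀ i, 0 < g x i) : ContinuousAt (fun y => expHilbertDist (f y) (g y)) x :=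
  (hf.maxRatio hg hgx).mul (hg.maxRatio hf hfx)

end MaxRatio

section MSP

variable {N : ℕ} {f : (Fin N → ℝ) → ℝ} {x y : Fin N → ℝ} {α : ℝ}

theorem IsMSPFun.apply_lt_of_le_smul (hf : IsMSPFun f) (hx : ∀ i, 0 < x i)
    (hy : ∀ i, 0 < y i) (hα : 1 < α) (hyx : y ≤ α • x) : f y < α * f x :=
  (hf.2.1 y _ hy (smul_apply_pos (by linarith) hx) hyx).trans_lt (hf.2.2.1 α hα x hx)

theorem IsMSPFun.apply_le_of_le_smul (hf : IsMSPFun f) (hx : ∀ i, 0 < x i)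
    (hy : ∀ i, 0 < y i) (hα : 1 ≤ α) (hyx : y ≤ α • x) : f y ≤ α * f x := by
  rcases hα.eq_or_lt with rfl | hα
  · rw [one_smul] at hyx
    simpa using hf.2.1 y x hy hx hyx
  · exact (hf.apply_lt_of_le_smul hx hy hα hyx).le

theorem IsMSPFun.sInf_le (hf : IsMSPFun f) (hx : ∀ i, 0 < x i) : sInf (f '' PosCone N) ≤ f x :=
  csInf_le ⟨0, forall_mem_image.2 fun y hy => (hf.1 y hy).le⟩ (mem_image_of_mem f hx)

theorem IsMSPFun.continuousAt (hf : IsMSPFun f) (hx : ∀ i, 0 < x i) : ContinuousAt f x := by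
  obtain ⟨hpos, hmono, hscal, -⟩ := hf
  have hbox : ∀ {α : ℝ}, 1 < α → Icc (α⁻¹ • x) (α • x) ∈ 𝓝 x := fun hα =>
    pi_Icc_mem_nhds (fun i => mul_lt_of_lt_one_left (hx i) (inv_lt_one_of_one_lt₀ hα))
      (fun i => lt_mul_left (hx i) hα)
  have hbox_pos : ∀ {α : ℝ}, 1 < α → ∀ y ∈ Icc (α⁻¹ • x) (α • x), ∀ i, 0 < y i :=
    fun hα y hy i => (smul_apply_pos (inv_pos.2 (by linarith)) hx i).trans_le (hy.1 i)
  have hfx := hpos x hx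
  refine tendsto_order.2 ⟨fun a ha => ?_, fun b hb => ?_⟩
  · rcases le_or_gt a 0 with ha0 | ha0
    · filter_upwards [hbox one_lt_two] with y hy
      exact ha0.trans_lt (hpos y (hbox_pos one_lt_two y hy))
    -- scalability with `α = f x / a`, applied at `α⁻¹ • x`, gives `a = α⁻¹ * f x < f (α⁻¹ • x)`
    have hα : 1 < f x / a := (one_lt_div ha0).2 ha
    have hαx := hscal _ hα _ (smul_apply_pos (inv_pos.2 (by linarith)) hx)
    rw [smul_smul, mul_inv_cancel₀ (by linarith), one_smul] at hαx
    filter_upwards [hbox hα] with y hy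
    calc a = (f x / a)⁻¹ * f x := by field_simp
      _ < f ((f x / a)⁻¹ • x) := by rwa [inv_mul_lt_iff₀ (by linarith)]
      _ ≤ f y := hmono _ _ (smul_apply_pos (inv_pos.2 (by linarith)) hx)
          (hbox_pos hα y hy) hy.1
  · have hα : 1 < b / f x := (one_lt_div hfx).2 hb
    filter_upwards [hbox hα] with y hy
    calc f y ≤ f ((b / f x) • x) :=
          hmono _ _ (hbox_pos hα y hy) (smul_apply_pos (by linarith) hx) hy.2
      _ < b / f x * f x := hscal _ hα x hx
      _ = b := div_mul_cancel₀ b hfx.ne'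

variable {T : (Fin N → ℝ) → Fin N → ℝ}

theorem IsMSPMap.continuousAt (hT : IsMSPMap T) (hx : ∀ i, 0 < x i) : ContinuousAt T x :=
  continuousAt_pi.2 fun i => (hT i).continuousAt hx

variable [Nonempty (Fin N)]

theorem IsMSPMap.maxRatio_apply_le (hT : IsMSPMap T) (hx : ∀ i, 0 < x i) (hy : ∀ i, 0 < y i)
    (h : 1 ≤ maxRatio x y) : maxRatio (T x) (T y) ≤ maxRatio x y :=
  (maxRatio_le_iff fun i => (hT i).1 y hy).2 fun i =>
    (hT i).apply_le_of_le_smul hy hx h fun j => le_maxRatio_mul hy j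

theorem IsMSPMap.maxRatio_apply_lt (hT : IsMSPMap T) (hx : ∀ i, 0 < x i) (hy : ∀ i, 0 < y i)
    (h : 1 < maxRatio x y) : maxRatio (T x) (T y) < maxRatio x y :=
  (maxRatio_lt_iff fun i => (hT i).1 y hy).2 fun i =>
    (hT i).apply_lt_of_le_smul hy hx h fun j => le_maxRatio_mul hy j

theorem IsMSPMap.expHilbertDist_apply_le (hT : IsMSPMap T) (hx : ∀ i, 0 < x i)
    (hy : ∀ i, 0 < y i) (hxy : 1 ≤ maxRatio x y) (hyx : 1 ≤ maxRatio y x) :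
    expHilbertDist (T x) (T y) ≤ expHilbertDist x y :=
  mul_le_mul (hT.maxRatio_apply_le hx hy hxy) (hT.maxRatio_apply_le hy hx hyx)
    (maxRatio_pos (fun i => (hT i).1 y hy) fun i => (hT i).1 x hx).le (by linarith)

theorem IsMSPMap.expHilbertDist_apply_lt (hT : IsMSPMap T) (hx : ∀ i, 0 < x i)
    (hy : ∀ i, 0 < y i) (hxy : 1 ≤ maxRatio x y) (hyx : 1 ≤ maxRatio y x) (hne : x ≠ y) :
    expHilbertDist (T x) (T y) < expHilbertDist x y := by
  have hTx i := (hT i).1 x hx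
  have hTy i := (hT i).1 y hy
  rcases hxy.lt_or_eq with hxy | hxy
  · exact mul_lt_mul (hT.maxRatio_apply_lt hx hy hxy) (hT.maxRatio_apply_le hy hx hyx)
      (maxRatio_pos hTy hTx) (by linarith)
  rcases hyx.lt_or_eq with hyx | hyx
  · exact mul_lt_mul' (hT.maxRatio_apply_le hx hy hxy.le) (hT.maxRatio_apply_lt hy hx hyx)
      (maxRatio_pos hTy hTx).le (by linarith)
  exact absurd (eq_of_maxRatio_le_one hx hy hxy.ge hyx.ge) hne

end MSP

section MonoNorm

variable {N : ℕ} {nrm : (Fin N → ℝ) → ℝ} {x y : Fin N → ℝ}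

theorem IsMonoNorm.nonneg (h : IsMonoNorm nrm) (x : Fin N → ℝ) : 0 ≤ nrm x := by
  have hneg : nrm (-x) = nrm x := by simpa using h.2.1 (-1) x
  have hzero : nrm 0 = 0 := (h.1 0).2 rfl
  have := h.2.2.1 x (-x)
  rw [add_neg_cancel, hzero, hneg] at this
  linarith

theorem IsMonoNorm.convexOn (h : IsMonoNorm nrm) : ConvexOn ℝ univ nrm :=
  ⟨convex_univ, fun x _ y _ a b ha hb _ => by
    simpa only [h.2.1, abs_of_nonneg ha, abs_of_nonneg hb, smul_eq_mul] using
      h.2.2.1 (a • x) (b • y)⟩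

theorem IsMonoNorm.continuous (h : IsMonoNorm nrm) : Continuous nrm :=
  continuousOn_univ.1 (h.convexOn.continuousOn isOpen_univ)

theorem IsMonoNorm.mul_norm_single_le (h : IsMonoNorm nrm) (hx : ∀ i, 0 ≤ x i) (i : Fin N) :
    x i * nrm (Pi.single i 1) ≤ nrm x := by
  rw [← abs_of_nonneg (hx i), ← h.2.1]
  refine h.2.2.2 _ _ (fun j => ?_) hx fun j => ?_ <;>
    rcases eq_or_ne j i with rfl | hji <;> simp [*]

theorem IsMonoNorm.norm_single_pos (h : IsMonoNorm nrm) (i : Fin N) :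
    0 < nrm (Pi.single i 1) :=
  (h.nonneg _).lt_of_ne' fun h0 => by simpa using (h.1 _).1 h0

theorem IsMonoNorm.le_inv_norm_single (h : IsMonoNorm nrm) (hx : ∀ i, 0 ≤ x i)
    (hx1 : nrm x = 1) : x ≤ fun i => (nrm (Pi.single i 1))⁻¹ := fun i => by
  change x i ≤ (nrm (Pi.single i 1))⁻¹
  rw [← one_div, le_div_iff₀ (h.norm_single_pos i)]
  exact (h.mul_norm_single_le hx i).trans hx1.le

variable [Nonempty (Fin N)]

theorem IsMonoNorm.pos_of_pos (h : IsMonoNorm nrm) (hx : ∀ i, 0 < x i) : 0 < nrm x :=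
  have i := Classical.arbitrary (Fin N)
  (mul_pos (hx i) (h.norm_single_pos i)).trans_le (h.mul_norm_single_le (fun j => (hx j).le) i)

theorem IsMonoNorm.one_le_maxRatio (h : IsMonoNorm nrm) (hx : ∀ i, 0 < x i)
    (hy : ∀ i, 0 < y i) (hx1 : nrm x = 1) (hy1 : nrm y = 1) : 1 ≤ maxRatio x y := by
  have hpos := maxRatio_pos hx hy
  have := h.2.2.2 x _ (fun i => (hx i).le) (fun i => (smul_apply_pos hpos hy i).le)
    fun i => le_maxRatio_mul hy i
  rwa [h.2.1, abs_of_pos hpos, hx1, hy1, mul_one] at this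

end MonoNorm

noncomputable def normalizedMap {N : ℕ} (nrm : (Fin N → ℝ) → ℝ) (T : (Fin N → ℝ) → Fin N → ℝ)
    (v : Fin N → ℝ) : Fin N → ℝ :=
  (nrm (T v))⁻¹ • T v

section NormalizedMap

variable {N : ℕ} [Nonempty (Fin N)] {T : (Fin N → ℝ) → Fin N → ℝ} {nrm : (Fin N → ℝ) → ℝ}
  {v xs : Fin N → ℝ} {γ : ℝ}

theorem normalizedMap_pos (hT : IsMSPMap T) (hnrm : IsMonoNorm nrm) (hv : ∀ i, 0 < v i) :
    ∀ i, 0 < normalizedMap nrm T v i :=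
  smul_apply_pos (inv_pos.2 (hnrm.pos_of_pos fun i => (hT i).1 v hv)) fun i => (hT i).1 v hv

theorem norm_normalizedMap (hT : IsMSPMap T) (hnrm : IsMonoNorm nrm) (hv : ∀ i, 0 < v i) :
    nrm (normalizedMap nrm T v) = 1 := by
  have hpos := hnrm.pos_of_pos fun i => (hT i).1 v hv
  rw [normalizedMap, hnrm.2.1, abs_of_pos (inv_pos.2 hpos), inv_mul_cancel₀ hpos.ne']

theorem continuousAt_normalizedMap (hT : IsMSPMap T) (hnrm : IsMonoNorm nrm)
    (hv : ∀ i, 0 < v i) : ContinuousAt (normalizedMap nrm T) v :=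
  ((hnrm.continuous.continuousAt.comp (hT.continuousAt hv)).inv₀
    (hnrm.pos_of_pos fun i => (hT i).1 v hv).ne').smul (hT.continuousAt hv)

theorem exists_isCompact_normalizedMap_mem (hT : IsMSPMap T) (hnrm : IsMonoNorm nrm) :
    ∃ K : Set (Fin N → ℝ), IsCompact K ∧ K ⊆ PosCone N ∩ {v | nrm v = 1} ∧
      ∀ v, (∀ i, 0 < v i) → nrm v = 1 → normalizedMap nrm T v ∈ K := by
  set b : Fin N → ℝ := fun i => (nrm (Pi.single i 1))⁻¹
  have hb i : 0 < b i := inv_pos.2 (hnrm.norm_single_pos i)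
  have hTb i := (hT i).1 b hb
  set a : Fin N → ℝ := fun i => sInf ((fun v => T v i) '' PosCone N) / nrm (T b)
  refine ⟨Icc a b ∩ {v | nrm v = 1},
    isCompact_Icc.inter_right (isClosed_eq hnrm.continuous continuous_const), ?_, ?_⟩
  · rintro v ⟨hv, hv1⟩
    exact ⟨fun i => (div_pos (hT i).2.2.2 (hnrm.pos_of_pos hTb)).trans_le (hv.1 i), hv1⟩
  intro v hv hv1
  have hTv i := (hT i).1 v hv
  have hTv_le : T v ≤ T b := fun i =>
    (hT i).2.1 v b hv hb (hnrm.le_inv_norm_single (fun j => (hv j).le) hv1)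
  refine ⟨⟨fun i => ?_, hnrm.le_inv_norm_single (fun i => (normalizedMap_pos hT hnrm hv i).le)
    (norm_normalizedMap hT hnrm hv)⟩, norm_normalizedMap hT hnrm hv⟩
  rw [normalizedMap, Pi.smul_apply, smul_eq_mul, inv_mul_eq_div]
  exact div_le_div₀ (hTv i).le ((hT i).sInf_le hv) (hnrm.pos_of_pos hTv)
    (hnrm.2.2.2 _ _ (fun j => (hTv j).le) (fun j => (hTb j).le) hTv_le)

theorem expHilbertDist_normalizedMap (hT : IsMSPMap T) (hnrm : IsMonoNorm nrm)
    (hγ : 0 < γ) (hTxs : T xs = γ • xs) (hv : ∀ i, 0 < v i) :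
    expHilbertDist (normalizedMap nrm T v) xs = expHilbertDist (T v) (T xs) := by
  have hpos := hnrm.pos_of_pos fun i => (hT i).1 v hv
  rw [normalizedMap, expHilbertDist_smul_left (inv_pos.2 hpos), hTxs,
    expHilbertDist_smul_right hγ]

theorem expHilbertDist_normalizedMap_le (hT : IsMSPMap T) (hnrm : IsMonoNorm nrm)
    (hxs : ∀ i, 0 < xs i) (hone : nrm xs = 1) (hγ : 0 < γ) (hTxs : T xs = γ • xs)
    (hv : ∀ i, 0 < v i) (hv1 : nrm v = 1) :
    expHilbertDist (normalizedMap nrm T v) xs ≤ expHilbertDist v xs := by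
  rw [expHilbertDist_normalizedMap hT hnrm hγ hTxs hv]
  exact hT.expHilbertDist_apply_le hv hxs (hnrm.one_le_maxRatio hv hxs hv1 hone)
    (hnrm.one_le_maxRatio hxs hv hone hv1)

theorem eq_of_expHilbertDist_normalizedMap_eq (hT : IsMSPMap T) (hnrm : IsMonoNorm nrm)
    (hxs : ∀ i, 0 < xs i) (hone : nrm xs = 1) (hγ : 0 < γ) (hTxs : T xs = γ • xs)
    (hv : ∀ i, 0 < v i) (hv1 : nrm v = 1)
    (heq : expHilbertDist (normalizedMap nrm T v) xs = expHilbertDist v xs) : v = xs := by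
  by_contra hne
  rw [expHilbertDist_normalizedMap hT hnrm hγ hTxs hv] at heq
  exact (hT.expHilbertDist_apply_lt hv hxs (hnrm.one_le_maxRatio hv hxs hv1 hone)
    (hnrm.one_le_maxRatio hxs hv hone hv1) hne).ne heq

end NormalizedMap

theorem stmt4_general {N : ℕ} (T : (Fin N → ℝ) → (Fin N → ℝ)) (hT : IsMSPMap T)
    (nrm : (Fin N → ℝ) → ℝ) (hnrm : IsMonoNorm nrm)
    (xs : Fin N → ℝ) (hxs : ∀ i, 0 < xs i) (hone : nrm xs = 1)
    (heig : ∃ γ : ℝ, 0 < γ ∧ T xs = γ • xs) :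
    ∀ x : ℕ → (Fin N → ℝ), (∀ i, 0 < x 0 i) →
      (∀ n, x (n + 1) = (nrm (T (x n)))⁻¹ • T (x n)) →
      Filter.Tendsto x Filter.atTop (nhds xs) := by
  intro x hx0 hrec
  obtain hN | hN := isEmpty_or_nonempty (Fin N)
  · exact tendsto_const_nhds.congr fun n => Subsingleton.elim _ _
  obtain ⟨γ, hγ, hTxs⟩ := heig
  have hxpos : ∀ n, ∀ i, 0 < x n i := by
    intro n
    induction n with
    | zero => exact hx0
    | succ n ih => rw [hrec]; exact normalizedMap_pos hT hnrm ih
  obtain ⟨K, hK, hKsub, hmapsto⟩ := exists_isCompact_normalizedMap_mem hT hnrm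
  have hxK n : x (n + 2) ∈ K := by
    rw [hrec]
    exact hmapsto _ (hxpos _) (hrec n ▸ norm_normalizedMap hT hnrm (hxpos n))
  refine (tendsto_add_atTop_iff_nat 2).1 <| tendsto_of_isCompact_of_lyapunov hK
    (Φ := fun v => expHilbertDist v xs) hxK (fun n => hrec _)
    (fun z hz => continuousAt_normalizedMap hT hnrm (hKsub hz).1)
    (fun z hz => continuousAt_id.expHilbertDist continuousAt_const (hKsub hz).1 hxs)
    (fun z hz => expHilbertDist_normalizedMap_le hT hnrm hxs hone hγ hTxs
      (hKsub hz).1 (hKsub hz).2)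
    (fun z hz => eq_of_expHilbertDist_normalizedMap_eq hT hnrm hxs hone hγ hTxs
      (hKsub hz).1 (hKsub hz).2)

/-- Proposition 1 (convergence of the normalized fixed point iteration): if `x*` is the
unique positive vector with `‖x*‖ = 1` that satisfies `T x* = γ • x*` for some `γ > 0`,
then for every starting point `x₁ ∈ ℝ₊₊^N` the sequence `xₙ₊₁ = T(xₙ)/‖T(xₙ)‖`
converges to `x*`. -/
theorem stmt4 {N : ℕ} (T : (Fin N → ℝ) → (Fin N → ℝ)) (hT : IsMSPMap T)
    (nrm : (Fin N → ℝ) → ℝ) (hnrm : IsMonoNorm nrm)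
    (xs : Fin N → ℝ) (hxs : ∀ i, 0 < xs i) (hone : nrm xs = 1)
    (heig : ∃ γ : ℝ, 0 < γ ∧ T xs = γ • xs)
    (huniq : ∀ x : Fin N → ℝ, (∀ i, 0 < x i) → nrm x = 1 →
      (∃ γ : ℝ, 0 < γ ∧ T x = γ • x) → x = xs) :
    ∀ x : ℕ → (Fin N → ℝ), (∀ i, 0 < x 0 i) →
      (∀ n, x (n + 1) = (nrm (T (x n)))⁻¹ • T (x n)) →
      Filter.Tendsto x Filter.atTop (nhds xs) :=
  stmt4_general T hT nrm hnrm xs hxs hone heig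
end

section
/- Let (Ω, F, P) be a probability space, let K, N ∈ ℕ, let σ² > 0, fix a user index u ∈ {1,…,N}, and let h₁,…,h_N : Ω → ℂ^K and v_u : Ω → ℂ^K be random vectors. Define the instantaneous SINR s_u(p, ω) = p_u |h_u(ω)^H v_u(ω)|² / (∑_{k ≠ u} p_k |h_k(ω)^H v_u(ω)|² + σ²) and the achievable rate r_u(p) = E[log(1 + s_u(p, ω))]. Assume that for every p ∈ ℝ₊₊^N the expectation r_u(p) is well defined and finite, that E[|h_u(ω)^H v_u(ω)|²] < ∞, and that |h_u(ω)^H v_u(ω)| ≠ 0 for almost every ω ∈ Ω. Then the function f_u : ℝ₊₊^N → ℝ₊₊ defined by f_u(p) = p_u / r_u(p) is an MSP function. -/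
/-!
Pointwise in `ω`, the SINR grows with the user's own power and falls with interference, and
`x ↦ log (1 + x t) / x` is nonincreasing by concavity of `log (1 + ·)` (Bernoulli's inequality);
together these give `p_u r(q) ≤ q_u r(p)` for `p ≤ q`. Scaling `p` by `α > 1` raises the SINR
strictly wherever the desired gain is nonzero, i.e. almost surely, so `r(αp) > r(p)`.
Finally `log (1 + s) ≤ s ≤ p_u |h_uᴴ v_u|² / σ²` gives `r(p) ≤ p_u E[|h_uᴴ v_u|²] / σ²`, a
lower bound `σ² / E[|h_uᴴ v_u|²]` for `f_u`.
-/

open MeasureTheory Filter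

/-- `chGain a b = |aᴴ b|`, the modulus of the inner product between the aggregated
channel `a` and the beamformer `b` (conjugate-transpose convention). -/
noncomputable def chGain {K : ℕ} (a b : Fin K → ℂ) : ℝ :=
  ‖∑ i, (starRingEnd ℂ) (a i) * b i‖

/-- The instantaneous SINR of user `u` at power vector `p` and sample `ω`. -/
noncomputable def instSINR {K N : ℕ} {Ω : Type*}
    (hch : Fin N → Ω → (Fin K → ℂ)) (v : Ω → (Fin K → ℂ)) (σsq : ℝ) (u : Fin N)
    (p : Fin N → ℝ) (ω : Ω) : ℝ :=
  p u * chGain (hch u ω) (v ω) ^ 2 /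
    (∑ k ∈ Finset.univ.erase u, p k * chGain (hch k ω) (v ω) ^ 2 + σsq)

lemma mul_log_one_add_mul_le_of_le {a b t : ℝ} (ha : 0 < a) (hab : a ≤ b) (ht : 0 ≤ t) :
    a * Real.log (1 + b * t) ≤ b * Real.log (1 + a * t) := by
  have hat : 0 ≤ a * t := mul_nonneg ha.le ht
  have hbernoulli : 1 + b * t ≤ (1 + a * t) ^ (b / a) := by
    have h := one_add_mul_self_le_rpow_one_add (by linarith : -1 ≤ a * t)
      ((one_le_div ha).mpr hab)
    rwa [← mul_assoc, div_mul_cancel₀ b ha.ne'] at h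
  have hlog : Real.log (1 + b * t) ≤ b / a * Real.log (1 + a * t) := by
    rw [← Real.log_rpow (by linarith)]
    exact Real.log_le_log (by nlinarith) hbernoulli
  calc a * Real.log (1 + b * t) ≤ a * (b / a * Real.log (1 + a * t)) := by gcongr
    _ = b * Real.log (1 + a * t) := by field_simp

section Integral

variable {α : Type*} [MeasurableSpace α] {μ : Measure α} [NeZero μ] {f g : α → ℝ}

lemma integral_pos_of_ae_pos (hf : Integrable f μ) (hpos : ∀ᵐ x ∂μ, 0 < f x) :
    0 < ∫ x, f x ∂μ := by
  rw [integral_pos_iff_support_of_nonneg_ae (hpos.mono fun _ hx => hx.le) hf,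
    pos_iff_ne_zero, Ne, measure_eq_zero_iff_ae_notMem]
  intro hnot
  obtain ⟨x, hx, hxs⟩ := (hpos.and hnot).exists
  exact hxs hx.ne'

lemma integral_lt_integral_of_ae_lt (hf : Integrable f μ) (hg : Integrable g μ)
    (hlt : ∀ᵐ x ∂μ, f x < g x) : ∫ x, f x ∂μ < ∫ x, g x ∂μ := by
  have h := integral_pos_of_ae_pos (f := fun x => g x - f x) (hg.sub hf)
    (hlt.mono fun _ hx => sub_pos.mpr hx)
  rw [integral_sub hg hf] at h
  linarith

end Integral

lemma isMSPFun_div_of_rate {N : ℕ} (r : (Fin N → ℝ) → ℝ) (u : Fin N) (c : ℝ)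
    (hpos : ∀ p : Fin N → ℝ, (∀ i, 0 < p i) → 0 < r p)
    (hmono : ∀ p q : Fin N → ℝ, (∀ i, 0 < p i) → (∀ i, 0 < q i) → p ≤ q →
      p u * r q ≤ q u * r p)
    (hscale : ∀ α : ℝ, 1 < α → ∀ p : Fin N → ℝ, (∀ i, 0 < p i) → r p < r (α • p))
    (hbound : ∀ p : Fin N → ℝ, (∀ i, 0 < p i) → r p ≤ c * p u) :
    IsMSPFun (fun p => p u / r p) := by
  have hc : 0 < c := by
    have h := (hpos 1 fun _ => one_pos).trans_le (hbound 1 fun _ => one_pos)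
    simpa using h
  refine ⟨fun p hp => div_pos (hp u) (hpos p hp), ?_, ?_, ?_⟩
  · intro p q hp hq hpq
    rw [div_le_div_iff₀ (hpos p hp) (hpos q hq)]
    exact hmono p q hp hq hpq
  · intro α hα p hp
    calc (α • p) u / r (α • p) = α * (p u / r (α • p)) := by
          rw [Pi.smul_apply, smul_eq_mul, mul_div_assoc]
      _ < α * (p u / r p) := by
          gcongr
          exacts [hp u, hpos p hp, hscale α hα p hp]
  · refine (inv_pos.mpr hc).trans_le (le_csInf ⟨_, 1, fun _ => one_pos, rfl⟩ ?_)
    rintro _ ⟨p, hp, rfl⟩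
    rw [le_div_iff₀ (hpos p hp), inv_mul_le_iff₀ hc]
    exact hbound p hp

section SINR

variable {K N : ℕ} {Ω : Type*} (hch : Fin N → Ω → (Fin K → ℂ)) (v : Ω → (Fin K → ℂ))
  (σsq : ℝ) (u : Fin N)

noncomputable def interference (p : Fin N → ℝ) (ω : Ω) : ℝ :=
  ∑ k ∈ Finset.univ.erase u, p k * chGain (hch k ω) (v ω) ^ 2

lemma instSINR_eq (p : Fin N → ℝ) (ω : Ω) :
    instSINR hch v σsq u p ω =
      p u * chGain (hch u ω) (v ω) ^ 2 / (interference hch v u p ω + σsq) := rfl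

variable {hch v σsq u} {p q : Fin N → ℝ}

lemma interference_nonneg (hp : 0 ≤ p) (ω : Ω) : 0 ≤ interference hch v u p ω :=
  Finset.sum_nonneg fun k _ => mul_nonneg (hp k) (sq_nonneg _)

lemma interference_mono (hpq : p ≤ q) (ω : Ω) :
    interference hch v u p ω ≤ interference hch v u q ω :=
  Finset.sum_le_sum fun k _ => mul_le_mul_of_nonneg_right (hpq k) (sq_nonneg _)

lemma interference_smul (α : ℝ) (ω : Ω) :
    interference hch v u (α • p) ω = α * interference hch v u p ω := by
  simp only [interference, Finset.mul_sum, Pi.smul_apply, smul_eq_mul, mul_assoc]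

lemma instSINR_nonneg (hσ : 0 ≤ σsq) (hp : 0 ≤ p) (ω : Ω) : 0 ≤ instSINR hch v σsq u p ω :=
  div_nonneg (mul_nonneg (hp u) (sq_nonneg _))
    (add_nonneg (interference_nonneg hp ω) hσ)

lemma instSINR_pos (hσ : 0 < σsq) (hp : 0 ≤ p) (hpu : 0 < p u) {ω : Ω}
    (hω : chGain (hch u ω) (v ω) ≠ 0) : 0 < instSINR hch v σsq u p ω :=
  div_pos (mul_pos hpu (pow_pos ((norm_nonneg _).lt_of_ne' hω) 2))
    (add_pos_of_nonneg_of_pos (interference_nonneg hp ω) hσ)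

lemma instSINR_le (hσ : 0 < σsq) (hp : 0 ≤ p) (ω : Ω) :
    instSINR hch v σsq u p ω ≤ p u / σsq * chGain (hch u ω) (v ω) ^ 2 := by
  rw [instSINR_eq, div_mul_eq_mul_div]
  exact div_le_div_of_nonneg_left (mul_nonneg (hp u) (sq_nonneg _)) hσ
    (le_add_of_nonneg_left (interference_nonneg hp ω))

lemma instSINR_lt_smul (hσ : 0 < σsq) (hp : 0 ≤ p) (hpu : 0 < p u) {α : ℝ} (hα : 1 < α)
    {ω : Ω} (hω : chGain (hch u ω) (v ω) ≠ 0) :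
    instSINR hch v σsq u p ω < instSINR hch v σsq u (α • p) ω := by
  have hS : 0 < p u * chGain (hch u ω) (v ω) ^ 2 :=
    mul_pos hpu (pow_pos ((norm_nonneg _).lt_of_ne' hω) 2)
  have hI : 0 ≤ interference hch v u p ω := interference_nonneg hp ω
  rw [instSINR_eq, instSINR_eq, interference_smul, Pi.smul_apply, smul_eq_mul, mul_assoc,
    div_lt_div_iff₀ (by linarith) (by nlinarith)]
  nlinarith [mul_pos (mul_pos hS hσ) (sub_pos.mpr hα)]

lemma mul_log_one_add_instSINR_le (hσ : 0 < σsq) (hp : 0 ≤ p) (hpu : 0 < p u) (hpq : p ≤ q)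
    (ω : Ω) :
    p u * Real.log (1 + instSINR hch v σsq u q ω) ≤
      q u * Real.log (1 + instSINR hch v σsq u p ω) := by
  set G := chGain (hch u ω) (v ω) ^ 2
  have hIp : 0 < interference hch v u p ω + σsq :=
    add_pos_of_nonneg_of_pos (interference_nonneg hp ω) hσ
  have hIq : interference hch v u p ω + σsq ≤ interference hch v u q ω + σsq :=
    add_le_add_left (interference_mono hpq ω) σsq
  have hsq : q u * G / (interference hch v u q ω + σsq)
      ≤ q u * (G / (interference hch v u p ω + σsq)) := by
    rw [← mul_div_assoc]
    exact div_le_div_of_nonneg_left (mul_nonneg (hpu.le.trans (hpq u)) (sq_nonneg _)) hIp hIq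
  calc p u * Real.log (1 + instSINR hch v σsq u q ω)
      ≤ p u * Real.log (1 + q u * (G / (interference hch v u p ω + σsq))) := by
        gcongr
        · exact add_pos_of_pos_of_nonneg one_pos (instSINR_nonneg hσ.le (hp.trans hpq) ω)
        · exact hsq
    _ ≤ q u * Real.log (1 + p u * (G / (interference hch v u p ω + σsq))) :=
        mul_log_one_add_mul_le_of_le hpu (hpq u) (div_nonneg (sq_nonneg _) hIp.le)
    _ = q u * Real.log (1 + instSINR hch v σsq u p ω) := by
        rw [instSINR_eq, mul_div_assoc]

end SINR

section Rate

variable {K N : ℕ} {Ω : Type*} [MeasurableSpace Ω] (P : Measure Ω)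
  (hch : Fin N → Ω → (Fin K → ℂ)) (v : Ω → (Fin K → ℂ)) (σsq : ℝ) (u : Fin N)

noncomputable def achievableRate (p : Fin N → ℝ) : ℝ :=
  ∫ ω, Real.log (1 + instSINR hch v σsq u p ω) ∂P

variable {P hch v σsq u} {p q : Fin N → ℝ}

lemma achievableRate_pos [NeZero P] (hσ : 0 < σsq) (hp : ∀ i, 0 < p i)
    (hint : Integrable (fun ω => Real.log (1 + instSINR hch v σsq u p ω)) P)
    (hne : ∀ᵐ ω ∂P, chGain (hch u ω) (v ω) ≠ 0) :
    0 < achievableRate P hch v σsq u p :=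
  integral_pos_of_ae_pos hint <| hne.mono fun _ hω =>
    Real.log_pos (lt_add_of_pos_right 1 (instSINR_pos hσ (fun i => (hp i).le) (hp u) hω))

lemma mul_achievableRate_le (hσ : 0 < σsq) (hp : ∀ i, 0 < p i) (hpq : p ≤ q)
    (hint_p : Integrable (fun ω => Real.log (1 + instSINR hch v σsq u p ω)) P)
    (hint_q : Integrable (fun ω => Real.log (1 + instSINR hch v σsq u q ω)) P) :
    p u * achievableRate P hch v σsq u q ≤ q u * achievableRate P hch v σsq u p := by
  rw [achievableRate, achievableRate, ← integral_const_mul, ← integral_const_mul]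
  exact integral_mono (hint_q.const_mul _) (hint_p.const_mul _)
    (mul_log_one_add_instSINR_le hσ (fun i => (hp i).le) (hp u) hpq)

lemma achievableRate_lt_smul [NeZero P] (hσ : 0 < σsq) (hp : ∀ i, 0 < p i) {α : ℝ}
    (hα : 1 < α)
    (hint_p : Integrable (fun ω => Real.log (1 + instSINR hch v σsq u p ω)) P)
    (hint_αp : Integrable (fun ω => Real.log (1 + instSINR hch v σsq u (α • p) ω)) P)
    (hne : ∀ᵐ ω ∂P, chGain (hch u ω) (v ω) ≠ 0) :
    achievableRate P hch v σsq u p < achievableRate P hch v σsq u (α • p) := by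
  refine integral_lt_integral_of_ae_lt hint_p hint_αp (hne.mono fun ω hω => ?_)
  have hs : 0 ≤ instSINR hch v σsq u p ω := instSINR_nonneg hσ.le (fun i => (hp i).le) ω
  exact Real.log_lt_log (by linarith) (by
    linarith [instSINR_lt_smul hσ (fun i => (hp i).le) (hp u) hα hω])

lemma achievableRate_le (hσ : 0 < σsq) (hp : ∀ i, 0 < p i)
    (hint : Integrable (fun ω => Real.log (1 + instSINR hch v σsq u p ω)) P)
    (hgain : Integrable (fun ω => chGain (hch u ω) (v ω) ^ 2) P) :
    achievableRate P hch v σsq u p ≤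
      (∫ ω, chGain (hch u ω) (v ω) ^ 2 ∂P) / σsq * p u := by
  rw [div_mul_comm, ← integral_const_mul]
  refine integral_mono hint (hgain.const_mul _) fun ω => ?_
  have hs : 0 ≤ instSINR hch v σsq u p ω := instSINR_nonneg hσ.le (fun i => (hp i).le) ω
  calc Real.log (1 + instSINR hch v σsq u p ω) ≤ instSINR hch v σsq u p ω := by
        linarith [Real.log_le_sub_one_of_pos (by linarith : 0 < 1 + instSINR hch v σsq u p ω)]
    _ ≤ p u / σsq * chGain (hch u ω) (v ω) ^ 2 := instSINR_le hσ (fun i => (hp i).le) ω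

end Rate

/-- Proposition 3: with the achievable rate `r_u(p) = E[log(1 + s_u(p, ω))]` well
defined and finite on the positive cone, `E[|h_uᴴ v_u|²] < ∞`, and `|h_uᴴ v_u| ≠ 0`
almost surely, the function `f_u(p) = p_u / r_u(p)` is an MSP function. -/
theorem stmt10 {K N : ℕ} {Ω : Type*} [MeasurableSpace Ω]
    (P : Measure Ω) [IsProbabilityMeasure P]
    (σsq : ℝ) (hσ : 0 < σsq) (u : Fin N)
    (hch : Fin N → Ω → (Fin K → ℂ)) (v : Ω → (Fin K → ℂ))
    (hrint : ∀ p : Fin N → ℝ, (∀ i, 0 < p i) →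
      Integrable (fun ω => Real.log (1 + instSINR hch v σsq u p ω)) P)
    (hgain : Integrable (fun ω => chGain (hch u ω) (v ω) ^ 2) P)
    (hne : ∀ᵐ ω ∂P, chGain (hch u ω) (v ω) ≠ 0) :
    IsMSPFun (fun p : Fin N → ℝ =>
      p u / ∫ ω, Real.log (1 + instSINR hch v σsq u p ω) ∂P) :=
  isMSPFun_div_of_rate (achievableRate P hch v σsq u) u _
    (fun p hp => achievableRate_pos hσ hp (hrint p hp) hne)
    (fun p q hp hq hpq => mul_achievableRate_le hσ hp hpq (hrint p hp) (hrint q hq))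
    (fun _ hα p hp => achievableRate_lt_smul hσ hp hα (hrint p hp)
      (hrint _ fun i => mul_pos (zero_lt_one.trans hα) (hp i)) hne)
    (fun p hp => achievableRate_le hσ hp (hrint p hp) hgain)
end
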